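/- arXiv:2305.17822 — 3 statements merged into one kernel-verified Lean document; each statement's English description precedes it below -/
import Mathlib

section
/- For any hypergraph G = (V, E) and any λ, the independence polynomial of S_G satisfies Z_{S_G}(λ) = Σ_{S ⊆ V} λ^{|V| - |S|} (1 + λ)^{e(S)}, where e(S) is the number of edges of G containing at least one vertex of S. -/
/-!
An independent set of `S_G` splits as `A ⊔ B` with `A ⊆ V` and `B ⊆ E`, and it is independent
exactly when no edge in `B` is contained in `A`. For fixed `A` the admissible `B` are all subsets
of the edges not contained in `A`, which contribute `λ^|A| (1 + λ)^{#{e ∈ E | e ⊄ A}}` in total.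
Writing `A = V \ S`, an edge is not contained in `A` iff it meets `S`.
-/

/-- The edge set of `S_G`: for a hypergraph with edges `E : Finset (Finset V)`,
`S_G` has vertex set `V ⊕ Finset V` and edges `e ∪ {e}` for `e ∈ E`. -/
def SGedges {V : Type*} [DecidableEq V] (E : Finset (Finset V)) :
    Finset (Finset (V ⊕ Finset V)) :=
  E.image (fun e => e.image Sum.inl ∪ {Sum.inr e})

/-- The vertex set of `S_G`: all of `V` together with (the names of) the edges of `G`. -/
def SGverts {V : Type*} [Fintype V] [DecidableEq V] (E : Finset (Finset V)) :
    Finset (V ⊕ Finset V) :=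
  Finset.univ.image Sum.inl ∪ E.image Sum.inr

open Finset

section

variable {α β M : Type*} [AddCommMonoid M]

theorem Finset.sum_powerset_disjSum (s : Finset α) (t : Finset β) (f : Finset (α ⊕ β) → M) :
    ∑ u ∈ (s.disjSum t).powerset, f u = ∑ A ∈ s.powerset, ∑ B ∈ t.powerset, f (A.disjSum B) := by
  rw [← sum_product' s.powerset t.powerset fun A B => f (A.disjSum B)]
  refine sum_nbij' (fun u => (u.toLeft, u.toRight)) (fun p => p.1.disjSum p.2) ?_ ?_ ?_ ?_ ?_
  · intro u hu
    simpa [subset_disjSum] using hu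
  · intro p hp
    simpa [disjSum_subset, subset_disjSum] using hp
  · intro u _
    exact toLeft_disjSum_toRight
  · intro p _
    simp
  · intro u _
    simp [toLeft_disjSum_toRight]

theorem Finset.filter_powerset_forall (t : Finset α) (p : α → Prop) [DecidablePred p] :
    {B ∈ t.powerset | ∀ x ∈ B, p x} = (t.filter p).powerset := by
  ext B
  simp only [mem_filter, mem_powerset, subset_iff]
  grind

end

theorem Finset.sum_pow_card_powerset {R ι : Type*} [CommSemiring R] (s : Finset ι) (a : R) :
    ∑ B ∈ s.powerset, a ^ #B = (1 + a) ^ #s := by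
  simpa [add_comm] using sum_pow_mul_eq_add_pow a 1 s

section SG

variable {V : Type*} [DecidableEq V]

theorem SGverts_eq_disjSum [Fintype V] (E : Finset (Finset V)) :
    SGverts E = univ.disjSum E := by
  ext (v | e) <;> simp [SGverts]

theorem SGedge_subset_disjSum_iff (e A : Finset V) (B : Finset (Finset V)) :
    e.image Sum.inl ∪ {Sum.inr e} ⊆ A.disjSum B ↔ e ⊆ A ∧ e ∈ B := by
  simp [subset_iff, and_comm]

theorem forall_not_SGedge_subset_disjSum_iff {E B : Finset (Finset V)} (hB : B ⊆ E)
    (A : Finset V) :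
    (∀ f ∈ SGedges E, ¬ f ⊆ A.disjSum B) ↔ ∀ e ∈ B, ¬ e ⊆ A := by
  simp only [SGedges, forall_mem_image, SGedge_subset_disjSum_iff, not_and']
  exact ⟨fun h e he => h (hB he) he, fun h e _ => h e⟩

theorem sum_SGindependent_eq [Fintype V] {M : Type*} [AddCommMonoid M]
    (E : Finset (Finset V)) (f : Finset (V ⊕ Finset V) → M) :
    ∑ I ∈ (SGverts E).powerset.filter (fun I => ∀ f ∈ SGedges E, ¬ f ⊆ I), f I
      = ∑ A ∈ (univ : Finset V).powerset, ∑ B ∈ (E.filter (¬ · ⊆ A)).powerset,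
          f (A.disjSum B) := by
  rw [SGverts_eq_disjSum, sum_filter, sum_powerset_disjSum]
  refine sum_congr rfl fun A _ => ?_
  rw [← filter_powerset_forall, sum_filter]
  refine sum_congr rfl fun B hB => ?_
  congr 1
  exact propext (forall_not_SGedge_subset_disjSum_iff (mem_powerset.mp hB) A)

end SG

/-- `Z_{S_G}(λ) = Σ_{S ⊆ V} λ^{|V|-|S|} (1+λ)^{e(S)}`, where `e(S)` counts the edges of `G`
meeting `S`. -/
theorem stmt_3 {V : Type*} [Fintype V] [DecidableEq V] (E : Finset (Finset V)) (lam : ℝ) :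
    ∑ I ∈ (SGverts E).powerset.filter (fun I => ∀ f ∈ SGedges E, ¬ f ⊆ I), lam ^ I.card
      = ∑ S ∈ (Finset.univ : Finset V).powerset,
          lam ^ (Fintype.card V - S.card) *
            (1 + lam) ^ (E.filter (fun e => (e ∩ S).Nonempty)).card := by
  calc _ = ∑ A ∈ (univ : Finset V).powerset, ∑ B ∈ (E.filter (¬ · ⊆ A)).powerset,
          lam ^ #A * lam ^ #B := by
        simp only [sum_SGindependent_eq, card_disjSum, pow_add]
    _ = ∑ A ∈ (univ : Finset V).powerset, lam ^ #A * (1 + lam) ^ #(E.filter (¬ · ⊆ A)) := by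
        simp only [← mul_sum, sum_pow_card_powerset]
    _ = _ := by
        rw [powerset_univ]
        refine (Fintype.sum_bijective compl compl_involutive.bijective _ _ fun S => ?_).symm
        simp only [card_compl, subset_compl_iff_disjoint_right, not_disjoint_iff_nonempty_inter]
end

section
/- Let n ≥ 2, α a real with 3 log n ≤ α ≤ n, and λ₀ = -3 log n / α. Suppose G = (V, E) is a hypergraph on n vertices with e(S) ≥ α|S| for all S ⊆ V. Then |Σ_{∅ ≠ S ⊆ V} λ₀^{-|S|} (1 + λ₀)^{e(S)}| < 1. -/
/-!
Every term is bounded in absolute value by `n^{-2|S|}`: from `1 + λ₀ ≤ e^{λ₀}` and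
`e(S) ≥ α|S|` we get `(1 + λ₀)^{e(S)} ≤ e^{λ₀ α |S|} = n^{-3|S|}`, while
`|λ₀|^{-1} = α / (3 log n) ≤ n`. Summing over the nonempty `S` gives
`(1 + n^{-2})^n - 1 ≤ e^{1/n} - 1 < 1`.
-/

open Finset Real

theorem sum_pow_card_filter_ne_empty {ι R : Type*} [DecidableEq ι] [CommRing R]
    (s : Finset ι) (x : R) :
    ∑ t ∈ s.powerset.filter (fun t => t ≠ ∅), x ^ #t = (1 + x) ^ #s - 1 := by
  rw [filter_ne', sum_erase_eq_sub (empty_mem_powerset s), add_comm,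
    ← sum_pow_mul_eq_add_pow x 1 s]
  simp

theorem one_add_inv_sq_pow_sub_one_lt {n : ℕ} (hn : 2 ≤ n) :
    (1 + ((n : ℝ) ^ 2)⁻¹) ^ n - 1 < 1 := by
  have hn' : (2 : ℝ) ≤ n := by exact_mod_cast hn
  have hinv_lt : (n : ℝ)⁻¹ < 1 := inv_lt_one_of_one_lt₀ (by linarith)
  have hexp : exp (n : ℝ)⁻¹ < 2 :=
    calc exp (n : ℝ)⁻¹ < 1 / (1 - (n : ℝ)⁻¹) :=
          exp_bound_div_one_sub_of_interval' (by positivity) hinv_lt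
      _ ≤ 2 := by
          rw [div_le_iff₀ (by linarith)]
          have : (n : ℝ)⁻¹ ≤ 2⁻¹ := inv_anti₀ (by norm_num) hn'
          linarith
  calc (1 + ((n : ℝ) ^ 2)⁻¹) ^ n - 1 ≤ exp (((n : ℝ) ^ 2)⁻¹) ^ n - 1 := by
        gcongr
        linarith [add_one_le_exp ((n : ℝ) ^ 2)⁻¹]
    _ = exp (n : ℝ)⁻¹ - 1 := by
        rw [← exp_nat_mul]
        field_simp
    _ < 1 := by linarith

theorem abs_zpow_neg_mul_one_add_pow_le {lam c : ℝ} (h₁ : -1 ≤ lam) (h₀ : lam < 0)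
    {k m : ℕ} (hkm : c * k ≤ m) :
    |lam ^ (-(k : ℤ)) * (1 + lam) ^ m| ≤ (exp (lam * c) / -lam) ^ k := by
  have hbase : 0 ≤ 1 + lam := by linarith
  have hpow : (1 + lam) ^ m ≤ exp (lam * c) ^ k :=
    calc (1 + lam) ^ m ≤ exp lam ^ m := by
          gcongr
          linarith [add_one_le_exp lam]
      _ = exp (lam * m) := by rw [← exp_nat_mul, mul_comm]
      _ ≤ exp (lam * (c * k)) := exp_le_exp.2 (mul_le_mul_of_nonpos_left hkm h₀.le)
      _ = exp (lam * c) ^ k := by rw [← exp_nat_mul]; ring_nf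
  rw [abs_mul, abs_of_nonneg (pow_nonneg hbase m), zpow_neg, zpow_natCast, abs_inv,
    abs_pow, abs_of_neg h₀, div_pow, div_eq_inv_mul]
  have hneg : 0 < -lam := neg_pos.2 h₀
  gcongr

/-- Let `n ≥ 2`, `3 log n ≤ α ≤ n`, `λ₀ = -3 log n / α`. If `G` is a hypergraph on `n`
vertices with `e(S) ≥ α|S|` for all vertex subsets `S`, then
`|Σ_{∅ ≠ S ⊆ V} λ₀^{-|S|} (1+λ₀)^{e(S)}| < 1`. -/
theorem stmt_6 {V : Type*} [Fintype V] [DecidableEq V] (E : Finset (Finset V))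
    (n : ℕ) (hn : n = Fintype.card V) (hn2 : 2 ≤ n)
    (α : ℝ) (hα₁ : 3 * Real.log n ≤ α) (hα₂ : α ≤ n)
    (lam₀ : ℝ) (hlam₀ : lam₀ = -(3 * Real.log n) / α)
    (hdense : ∀ S : Finset V, α * S.card ≤ (E.filter (fun e => (e ∩ S).Nonempty)).card) :
    |∑ S ∈ (Finset.univ : Finset V).powerset.filter (fun S => S ≠ ∅),
        lam₀ ^ (-(S.card : ℤ)) *
          (1 + lam₀) ^ (E.filter (fun e => (e ∩ S).Nonempty)).card| < 1 := by
  have hn' : (2 : ℝ) ≤ n := by exact_mod_cast hn2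
  have hlog : 1 ≤ 3 * log n := by
    linarith [log_two_gt_d9, log_le_log (by norm_num) hn']
  have hα : 0 < α := by linarith
  have hlam_neg : lam₀ < 0 := by rw [hlam₀]; exact div_neg_of_neg_of_pos (by linarith) hα
  have hlam_ge : -1 ≤ lam₀ := by rwa [hlam₀, neg_div, neg_le_neg_iff, div_le_one hα]
  have hratio : exp (lam₀ * α) / -lam₀ ≤ ((n : ℝ) ^ 2)⁻¹ := by
    have hexp : exp (lam₀ * α) = ((n : ℝ) ^ 3)⁻¹ := by
      rw [hlam₀, div_mul_cancel₀ _ hα.ne', exp_neg, ← Nat.cast_ofNat, ← log_pow,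
        exp_log (by positivity)]
    rw [hexp, hlam₀, neg_div, neg_neg, div_div_eq_mul_div, inv_mul_eq_div]
    calc α / (n : ℝ) ^ 3 / (3 * log n) ≤ α / (n : ℝ) ^ 3 :=
          div_le_self (by positivity) hlog
      _ ≤ n / (n : ℝ) ^ 3 := by gcongr
      _ = ((n : ℝ) ^ 2)⁻¹ := by field_simp
  calc _ ≤ ∑ S ∈ (univ : Finset V).powerset.filter (fun S => S ≠ ∅),
          |lam₀ ^ (-(S.card : ℤ)) * (1 + lam₀) ^ (E.filter (fun e => (e ∩ S).Nonempty)).card| :=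
        abs_sum_le_sum_abs _ _
    _ ≤ ∑ S ∈ (univ : Finset V).powerset.filter (fun S => S ≠ ∅), (((n : ℝ) ^ 2)⁻¹) ^ #S :=
        sum_le_sum fun S _ => (abs_zpow_neg_mul_one_add_pow_le hlam_ge hlam_neg (hdense S)).trans
          (pow_le_pow_left₀ (div_nonneg (exp_pos _).le (by linarith)) hratio _)
    _ = (1 + ((n : ℝ) ^ 2)⁻¹) ^ n - 1 := by rw [sum_pow_card_filter_ne_empty, card_univ, hn]
    _ < 1 := one_add_inv_sq_pow_sub_one_lt hn2
end

section
/- For each k ≥ 2 and Δ ≥ k, there exists a k-uniform, Δ-regular linear hypergraph on at most 2kΔ vertices. -/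
/-!
Index the vertices by `[k] × 𝔽_p` and take as edges the "lines" `{(i, a + i d) : i ∈ [k]}`
with `a ∈ 𝔽_p` and slope `d` in a fixed set `D` of `Δ` residues. Since `k ≤ p`, the abscissae
`0, …, k - 1` are distinct in `𝔽_p`, so two points of `[k] × 𝔽_p` lie on at most one line
(linearity), and a point `(i, b)` lies on exactly one line of each slope, namely `a = b - i d`
(regularity). Bertrand's postulate gives a prime `p ∈ (Δ, 2Δ]`, whence `kp ≤ 2kΔ` vertices.
-/

open Finset Function

namespace EdgeFamily

variable {V W : Type*}

def IsUniform (E : Finset (Finset V)) (k : ℕ) : Prop :=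
  ∀ e ∈ E, #e = k

def IsRegular [DecidableEq V] (E : Finset (Finset V)) (Δ : ℕ) : Prop :=
  ∀ v : V, #(E.filter (fun e => v ∈ e)) = Δ

def IsLinear [DecidableEq V] (E : Finset (Finset V)) : Prop :=
  ∀ e₁ ∈ E, ∀ e₂ ∈ E, e₁ ≠ e₂ → #(e₁ ∩ e₂) ≤ 1

def relabel (σ : V ≃ W) (E : Finset (Finset V)) : Finset (Finset W) :=
  E.map σ.finsetCongr.toEmbedding

variable {E : Finset (Finset V)} (σ : V ≃ W)

lemma IsUniform.relabel {k : ℕ} (h : IsUniform E k) : IsUniform (relabel σ E) k := by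
  simp only [IsUniform, EdgeFamily.relabel, forall_mem_map, Equiv.finsetCongr_apply,
    Equiv.coe_toEmbedding, card_map]
  exact h

variable [DecidableEq V] [DecidableEq W]

lemma IsRegular.relabel {Δ : ℕ} (h : IsRegular E Δ) : IsRegular (relabel σ E) Δ := by
  intro w
  rw [EdgeFamily.relabel, filter_map, card_map, ← h (σ.symm w)]
  congr 1
  refine filter_congr fun e _ => ?_
  simp [Equiv.finsetCongr_apply, mem_map_equiv]

lemma IsLinear.relabel (h : IsLinear E) : IsLinear (relabel σ E) := by
  simp only [IsLinear, EdgeFamily.relabel, forall_mem_map, Equiv.finsetCongr_apply,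
    Equiv.coe_toEmbedding, ← map_inter, card_map] at h ⊢
  exact fun e₁ h₁ e₂ h₂ hne => h e₁ h₁ e₂ h₂ (by rintro rfl; exact hne rfl)

end EdgeFamily

namespace AffineLine

variable {ι F : Type*} [Fintype ι] [Field F] (x : ι ↪ F)

def line (a d : F) : Finset (ι × F) :=
  univ.map ⟨fun i => (i, a + x i * d), fun _ _ h => congrArg Prod.fst h⟩

variable {x}

lemma mem_line {a d : F} {v : ι × F} : v ∈ line x a d ↔ v.2 = a + x v.1 * d := by
  simp only [line, mem_map, mem_univ, true_and, Prod.ext_iff]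
  exact ⟨fun ⟨i, hi, hv⟩ => hi ▸ hv.symm, fun h => ⟨v.1, rfl, h.symm⟩⟩

lemma card_line (a d : F) : #(line x a d) = Fintype.card ι := by
  simp [line]

lemma eq_of_mem_line_of_mem_line {a d a' d' : F} {u v : ι × F} (huv : u ≠ v)
    (hu : u ∈ line x a d) (hu' : u ∈ line x a' d')
    (hv : v ∈ line x a d) (hv' : v ∈ line x a' d') : (a, d) = (a', d') := by
  rw [mem_line] at hu hu' hv hv'
  have hx : x u.1 - x v.1 ≠ 0 := by
    refine sub_ne_zero.mpr fun h => huv (Prod.ext (x.injective h) ?_)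
    rw [hu, hv, h]
  have hd : d = d' := by
    have : (x u.1 - x v.1) * (d - d') = 0 := by linear_combination hu' - hu - hv' + hv
    exact sub_eq_zero.mp ((mul_eq_zero.mp this).resolve_left hx)
  subst hd
  simp only [Prod.mk.injEq, and_true]
  linear_combination hu' - hu

lemma line_injective (hι : 2 ≤ Fintype.card ι) : Injective fun q : F × F => line x q.1 q.2 := by
  intro q q' h
  obtain ⟨u, hu, v, hv, huv⟩ := one_lt_card.mp (hι.trans_eq (card_line (x := x) q.1 q.2).symm)
  simp only at h
  exact eq_of_mem_line_of_mem_line huv hu (h ▸ hu) hv (h ▸ hv)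

variable [Fintype F] [DecidableEq ι] [DecidableEq F]

variable (x) in
def lines (D : Finset F) : Finset (Finset (ι × F)) :=
  (univ ×ˢ D).image fun q => line x q.1 q.2

lemma isUniform_lines (D : Finset F) : EdgeFamily.IsUniform (lines x D) (Fintype.card ι) := by
  simp only [EdgeFamily.IsUniform, lines, forall_mem_image]
  exact fun q _ => card_line q.1 q.2

lemma isLinear_lines (D : Finset F) : EdgeFamily.IsLinear (lines x D) := by
  simp only [EdgeFamily.IsLinear, lines, forall_mem_image]
  rintro ⟨a, d⟩ - ⟨a', d'⟩ - hne
  refine card_le_one.mpr fun u hu v hv => by_contra fun huv => hne ?_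
  rw [mem_inter] at hu hv
  obtain ⟨rfl, rfl⟩ := Prod.mk.inj (eq_of_mem_line_of_mem_line huv hu.1 hu.2 hv.1 hv.2)
  rfl

lemma isRegular_lines (hι : 2 ≤ Fintype.card ι) (D : Finset F) :
    EdgeFamily.IsRegular (lines x D) (#D) := by
  rintro ⟨i, b⟩
  have hthrough : (univ ×ˢ D).filter (fun q => (i, b) ∈ line x q.1 q.2) =
      D.image fun d => (b - x i * d, d) := by
    ext ⟨a, d⟩
    simp only [mem_filter, mem_product, mem_univ, true_and, mem_line, mem_image, Prod.mk.injEq]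
    constructor
    · rintro ⟨hd, hb⟩
      exact ⟨d, hd, by rw [hb]; ring, rfl⟩
    · rintro ⟨d, hd, rfl, rfl⟩
      exact ⟨hd, by ring⟩
  rw [lines, filter_image, card_image_of_injective _ (line_injective hι), hthrough,
    card_image_of_injective _ fun d d' h => (Prod.ext_iff.mp h).2]

end AffineLine

open EdgeFamily in
lemma exists_uniform_regular_linear_of_field (F : Type*) [Field F] [Fintype F] [DecidableEq F]
    {k Δ : ℕ} (hk : 2 ≤ k) (hkF : k ≤ Fintype.card F) (hΔF : Δ ≤ Fintype.card F) :
    ∃ E : Finset (Finset (Fin (k * Fintype.card F))),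
      IsUniform E k ∧ IsRegular E Δ ∧ IsLinear E := by
  obtain ⟨x⟩ : Nonempty (Fin k ↪ F) := Embedding.nonempty_of_card_le (by simpa using hkF)
  obtain ⟨D, -, hD⟩ := exists_subset_card_eq (s := (univ : Finset F)) (by simpa using hΔF)
  have hFin : 2 ≤ Fintype.card (Fin k) := by simpa using hk
  let σ : Fin k × F ≃ Fin (k * Fintype.card F) := Fintype.equivFinOfCardEq (by simp)
  refine ⟨relabel σ (AffineLine.lines x D), ?_, ?_, ?_⟩
  · simpa using (AffineLine.isUniform_lines D).relabel σ
  · simpa [hD] using (AffineLine.isRegular_lines hFin D).relabel σ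
  · exact (AffineLine.isLinear_lines D).relabel σ

/-- For each `k ≥ 2` and `Δ ≥ k`, there exists a `k`-uniform, `Δ`-regular linear hypergraph
on at most `2kΔ` vertices. -/
theorem stmt_9 (k Δ : ℕ) (hk : 2 ≤ k) (hΔ : k ≤ Δ) :
    ∃ (n : ℕ) (E : Finset (Finset (Fin n))),
      n ≤ 2 * k * Δ ∧
      (∀ e ∈ E, e.card = k) ∧
      (∀ v : Fin n, (E.filter (fun e => v ∈ e)).card = Δ) ∧
      (∀ e₁ ∈ E, ∀ e₂ ∈ E, e₁ ≠ e₂ → (e₁ ∩ e₂).card ≤ 1) := by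
  obtain ⟨p, hp, hΔp, hp2Δ⟩ := Nat.exists_prime_lt_and_le_two_mul Δ (by omega)
  have : Fact p.Prime := ⟨hp⟩
  obtain ⟨E, huniform, hregular, hlinear⟩ := exists_uniform_regular_linear_of_field (ZMod p)
    (Δ := Δ) hk (by rw [ZMod.card]; omega) (by rw [ZMod.card]; omega)
  refine ⟨_, E, ?_, huniform, hregular, hlinear⟩
  calc k * Fintype.card (ZMod p) = k * p := by rw [ZMod.card]
    _ ≤ k * (2 * Δ) := Nat.mul_le_mul_left k hp2Δ
    _ = 2 * k * Δ := by ring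
end
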